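/- arXiv:1505.04650 — 2 statements merged into one kernel-verified Lean document; each statement's English description precedes it below -/
import Mathlib

section
/- Under the same hypotheses as the preceding proposition (ADMM iterates X̃_k, Ỹ_k, U_k, V_k, Λ_k, Φ_k generated by the stated update equations with Ã ∈ ℝ^{p×q}, LᵀL = I, RRᵀ = I, λ, φ, ξ > 0): whenever the sequence (X̃_k, Ỹ_k, U_k, V_k, Λ_k, Φ_k) converges, its limit (X̃_∞, Ỹ_∞, U_∞, V_∞, Λ_∞, Φ_∞) satisfies the KKT conditions: (X̃_∞Ỹ_∞ − Ã)Ỹ_∞ᵀ + LᵀΛ_∞ = 0; X̃_∞ᵀ(X̃_∞Ỹ_∞ − Ã) + Φ_∞Rᵀ = 0; LX̃_∞ − U_∞ = 0; Ỹ_∞R − V_∞ = 0; Λ_∞ ≤ 0 ≤ U_∞ entrywise with Λ_∞ ∘ U_∞ = 0; and Φ_∞ ≤ 0 ≤ V_∞ entrywise with Φ_∞ ∘ V_∞ = 0. -/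
open Matrix Filter Topology

/-- Entrywise nonnegative projection of a matrix: `(posPart B) i j = max (B i j) 0`. -/
def matPosPart {α β : Type*} (B : Matrix α β ℝ) : Matrix α β ℝ :=
  fun i j => max (B i j) 0

section aux

variable {a b c : Type*} [Fintype b] {l : Filter ℕ}

private lemma tendsto_matMul {f : ℕ → Matrix a b ℝ} {g : ℕ → Matrix b c ℝ}
    {A : Matrix a b ℝ} {B : Matrix b c ℝ}
    (hf : Tendsto f l (𝓝 A)) (hg : Tendsto g l (𝓝 B)) :
    Tendsto (fun k => f k * g k) l (𝓝 (A * B)) :=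
  ((continuous_fst.matrix_mul continuous_snd).tendsto (A, B)).comp (hf.prodMk_nhds hg)

private lemma tendsto_matTrans {f : ℕ → Matrix a b ℝ} {A : Matrix a b ℝ}
    (hf : Tendsto f l (𝓝 A)) :
    Tendsto (fun k => (f k)ᵀ) l (𝓝 Aᵀ) :=
  ((Continuous.matrix_transpose continuous_id).tendsto A).comp hf

private lemma continuous_matPosPart : Continuous (matPosPart : Matrix a b ℝ → Matrix a b ℝ) := by
  unfold matPosPart
  exact continuous_pi fun i => continuous_pi fun j =>
    (((continuous_apply j).comp (continuous_apply i))).max continuous_const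

private lemma tendsto_matPosPart {f : ℕ → Matrix a b ℝ} {A : Matrix a b ℝ}
    (hf : Tendsto f l (𝓝 A)) :
    Tendsto (fun k => matPosPart (f k)) l (𝓝 (matPosPart A)) :=
  (continuous_matPosPart.tendsto A).comp hf

private lemma max_fixed_point {u c : ℝ} (h : u = max (u + c) 0) :
    c ≤ 0 ∧ 0 ≤ u ∧ c * u = 0 := by
  have hu0 : 0 ≤ u := h ▸ le_max_right _ _
  have huc : u + c ≤ u := (le_max_left _ _).trans h.ge
  refine ⟨by linarith, hu0, ?_⟩
  rcases le_or_gt (u + c) 0 with hle | hlt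
  · have : u = 0 := by rw [h, max_eq_right hle]
    simp [this]
  · have h2 : max (u + c) 0 = u + c := max_eq_left hlt.le
    have hc : c = 0 := by have := h.trans h2; linarith
    simp [hc]

end aux

/-- **Corollary: if the compressed ADMM iterates converge, their limit is a KKT point.**
If the ADMM iterates for compressed NMF satisfy the stated update equations and the
sequence of iterates converges, then the limit is a KKT point of the compressed
NMF problem. -/
theorem admm_limit_is_KKT
    {p q m n r : ℕ}
    (Atil : Matrix (Fin p) (Fin q) ℝ)
    (L : Matrix (Fin m) (Fin p) ℝ) (hL : Lᵀ * L = 1)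
    (R : Matrix (Fin q) (Fin n) ℝ) (hR : R * Rᵀ = 1)
    (lam phi xi : ℝ) (hlam : 0 < lam) (hphi : 0 < phi) (hxi : 0 < xi)
    (X : ℕ → Matrix (Fin p) (Fin r) ℝ) (Y : ℕ → Matrix (Fin r) (Fin q) ℝ)
    (U : ℕ → Matrix (Fin m) (Fin r) ℝ) (V : ℕ → Matrix (Fin r) (Fin n) ℝ)
    (Lam : ℕ → Matrix (Fin m) (Fin r) ℝ) (Phi : ℕ → Matrix (Fin r) (Fin n) ℝ)
    (hX : ∀ k, X (k + 1) =
      (Atil * (Y k)ᵀ + lam • (Lᵀ * U k) - Lᵀ * Lam k) * (Y k * (Y k)ᵀ + lam • 1)⁻¹)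
    (hY : ∀ k, Y (k + 1) =
      ((X (k + 1))ᵀ * X (k + 1) + phi • 1)⁻¹ *
        ((X (k + 1))ᵀ * Atil + phi • (V k * Rᵀ) - Phi k * Rᵀ))
    (hU : ∀ k, U (k + 1) = matPosPart (L * X (k + 1) + lam⁻¹ • Lam k))
    (hV : ∀ k, V (k + 1) = matPosPart (Y (k + 1) * R + phi⁻¹ • Phi k))
    (hLam : ∀ k, Lam (k + 1) = Lam k + (xi * lam) • (L * X (k + 1) - U (k + 1)))
    (hPhi : ∀ k, Phi (k + 1) = Phi k + (xi * phi) • (Y (k + 1) * R - V (k + 1)))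
    (Xinf : Matrix (Fin p) (Fin r) ℝ) (Yinf : Matrix (Fin r) (Fin q) ℝ)
    (Uinf : Matrix (Fin m) (Fin r) ℝ) (Vinf : Matrix (Fin r) (Fin n) ℝ)
    (Laminf : Matrix (Fin m) (Fin r) ℝ) (Phiinf : Matrix (Fin r) (Fin n) ℝ)
    (hconv : Tendsto (fun k => (X k, Y k, U k, V k, Lam k, Phi k))
      atTop (𝓝 (Xinf, Yinf, Uinf, Vinf, Laminf, Phiinf))) :
    (Xinf * Yinf - Atil) * Yinfᵀ + Lᵀ * Laminf = 0 ∧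
    Xinfᵀ * (Xinf * Yinf - Atil) + Phiinf * Rᵀ = 0 ∧
    L * Xinf - Uinf = 0 ∧
    Yinf * R - Vinf = 0 ∧
    (∀ i j, Laminf i j ≤ 0) ∧ (∀ i j, 0 ≤ Uinf i j) ∧ (∀ i j, Laminf i j * Uinf i j = 0) ∧
    (∀ i j, Phiinf i j ≤ 0) ∧ (∀ i j, 0 ≤ Vinf i j) ∧ (∀ i j, Phiinf i j * Vinf i j = 0) := by
  -- component-wise limits
  have hX0 : Tendsto (fun k => X k) atTop (𝓝 Xinf) :=
    (continuous_fst.tendsto _).comp hconv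
  have hY0 : Tendsto (fun k => Y k) atTop (𝓝 Yinf) :=
    ((continuous_fst.comp continuous_snd).tendsto _).comp hconv
  have hU0 : Tendsto (fun k => U k) atTop (𝓝 Uinf) :=
    ((continuous_fst.comp (continuous_snd.comp continuous_snd)).tendsto _).comp hconv
  have hV0 : Tendsto (fun k => V k) atTop (𝓝 Vinf) :=
    ((continuous_fst.comp (continuous_snd.comp (continuous_snd.comp continuous_snd))).tendsto
      _).comp hconv
  have hLam0 : Tendsto (fun k => Lam k) atTop (𝓝 Laminf) :=
    ((continuous_fst.comp (continuous_snd.comp (continuous_snd.comp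
      (continuous_snd.comp continuous_snd)))).tendsto _).comp hconv
  have hPhi0 : Tendsto (fun k => Phi k) atTop (𝓝 Phiinf) :=
    ((continuous_snd.comp (continuous_snd.comp (continuous_snd.comp
      (continuous_snd.comp continuous_snd)))).tendsto _).comp hconv
  have hshift := tendsto_add_atTop_nat 1
  have hX1 : Tendsto (fun k => X (k + 1)) atTop (𝓝 Xinf) := hX0.comp hshift
  have hY1 : Tendsto (fun k => Y (k + 1)) atTop (𝓝 Yinf) := hY0.comp hshift
  have hU1 : Tendsto (fun k => U (k + 1)) atTop (𝓝 Uinf) := hU0.comp hshift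
  have hV1 : Tendsto (fun k => V (k + 1)) atTop (𝓝 Vinf) := hV0.comp hshift
  have hLam1 : Tendsto (fun k => Lam (k + 1)) atTop (𝓝 Laminf) := hLam0.comp hshift
  have hPhi1 : Tendsto (fun k => Phi (k + 1)) atTop (𝓝 Phiinf) := hPhi0.comp hshift
  -- primal feasibility for U
  have hfeasU : L * Xinf - Uinf = 0 := by
    have t1 : Tendsto (fun k => Lam (k + 1) - Lam k) atTop (𝓝 (Laminf - Laminf)) :=
      hLam1.sub hLam0
    have t2 : Tendsto (fun k => Lam (k + 1) - Lam k) atTop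
        (𝓝 ((xi * lam) • (L * Xinf - Uinf))) := by
      refine Tendsto.congr (fun k => ?_)
        (((tendsto_matMul tendsto_const_nhds hX1).sub hU1).const_smul (xi * lam))
      rw [hLam k]; abel
    have h0 := tendsto_nhds_unique t2 t1
    rw [sub_self] at h0
    rcases smul_eq_zero.mp h0 with h | h
    · exact absurd h (mul_pos hxi hlam).ne'
    · exact h
  -- primal feasibility for V
  have hfeasV : Yinf * R - Vinf = 0 := by
    have t1 : Tendsto (fun k => Phi (k + 1) - Phi k) atTop (𝓝 (Phiinf - Phiinf)) :=
      hPhi1.sub hPhi0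
    have t2 : Tendsto (fun k => Phi (k + 1) - Phi k) atTop
        (𝓝 ((xi * phi) • (Yinf * R - Vinf))) := by
      refine Tendsto.congr (fun k => ?_)
        (((tendsto_matMul hY1 tendsto_const_nhds).sub hV1).const_smul (xi * phi))
      rw [hPhi k]; abel
    have h0 := tendsto_nhds_unique t2 t1
    rw [sub_self] at h0
    rcases smul_eq_zero.mp h0 with h | h
    · exact absurd h (mul_pos hxi hphi).ne'
    · exact h
  have hLXU : L * Xinf = Uinf := sub_eq_zero.mp hfeasU
  have hYRV : Yinf * R = Vinf := sub_eq_zero.mp hfeasV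
  -- fixed point equation for U
  have hUeq : Uinf = matPosPart (Uinf + lam⁻¹ • Laminf) := by
    have t2 : Tendsto (fun k => U (k + 1)) atTop
        (𝓝 (matPosPart (L * Xinf + lam⁻¹ • Laminf))) := by
      refine Tendsto.congr (fun k => (hU k).symm)
        (tendsto_matPosPart ((tendsto_matMul tendsto_const_nhds hX1).add
          (hLam0.const_smul lam⁻¹)))
    have := tendsto_nhds_unique hU1 t2
    rwa [hLXU] at this
  have hVeq : Vinf = matPosPart (Vinf + phi⁻¹ • Phiinf) := by
    have t2 : Tendsto (fun k => V (k + 1)) atTop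
        (𝓝 (matPosPart (Yinf * R + phi⁻¹ • Phiinf))) := by
      refine Tendsto.congr (fun k => (hV k).symm)
        (tendsto_matPosPart ((tendsto_matMul hY1 tendsto_const_nhds).add
          (hPhi0.const_smul phi⁻¹)))
    have := tendsto_nhds_unique hV1 t2
    rwa [hYRV] at this
  -- sign conditions for (Laminf, Uinf)
  have hsignU : ∀ i j, Laminf i j ≤ 0 ∧ 0 ≤ Uinf i j ∧ Laminf i j * Uinf i j = 0 := by
    intro i j
    have h := congrFun (congrFun hUeq i) j
    simp only [matPosPart, Matrix.add_apply, Matrix.smul_apply, smul_eq_mul] at h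
    obtain ⟨hc, hu, hcu⟩ := max_fixed_point h
    have hlam' : (0 : ℝ) < lam⁻¹ := inv_pos.mpr hlam
    refine ⟨?_, hu, ?_⟩
    · nlinarith
    · have : lam⁻¹ * (Laminf i j * Uinf i j) = 0 := by rw [← mul_assoc]; exact hcu
      rcases mul_eq_zero.mp this with h' | h'
      · exact absurd h' hlam'.ne'
      · exact h'
  have hsignV : ∀ i j, Phiinf i j ≤ 0 ∧ 0 ≤ Vinf i j ∧ Phiinf i j * Vinf i j = 0 := by
    intro i j
    have h := congrFun (congrFun hVeq i) j
    simp only [matPosPart, Matrix.add_apply, Matrix.smul_apply, smul_eq_mul] at h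
    obtain ⟨hc, hu, hcu⟩ := max_fixed_point h
    have hphi' : (0 : ℝ) < phi⁻¹ := inv_pos.mpr hphi
    refine ⟨?_, hu, ?_⟩
    · nlinarith
    · have : phi⁻¹ * (Phiinf i j * Vinf i j) = 0 := by rw [← mul_assoc]; exact hcu
      rcases mul_eq_zero.mp this with h' | h'
      · exact absurd h' hphi'.ne'
      · exact h'
  -- stationarity in X
  have hMdet : ∀ k, IsUnit (Y k * (Y k)ᵀ + lam • (1 : Matrix (Fin r) (Fin r) ℝ)).det := by
    intro k
    have hps : Matrix.PosSemidef (Y k * (Y k)ᵀ) := by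
      have := Matrix.posSemidef_self_mul_conjTranspose (Y k)
      rwa [Matrix.conjTranspose_eq_transpose_of_trivial] at this
    have hpd : Matrix.PosDef (lam • (1 : Matrix (Fin r) (Fin r) ℝ)) := by
      rw [smul_one_eq_diagonal]
      exact Matrix.PosDef.diagonal fun _ => hlam
    exact (Matrix.PosDef.posSemidef_add hps hpd).det_pos.ne'.isUnit
  have hXk : ∀ k, X (k + 1) * (Y k * (Y k)ᵀ + lam • 1) =
      Atil * (Y k)ᵀ + lam • (Lᵀ * U k) - Lᵀ * Lam k := by
    intro k
    rw [hX k, Matrix.mul_assoc, Matrix.nonsing_inv_mul _ (hMdet k), Matrix.mul_one]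
  have keyX : Xinf * (Yinf * Yinfᵀ + lam • 1) =
      Atil * Yinfᵀ + lam • (Lᵀ * Uinf) - Lᵀ * Laminf := by
    have tL : Tendsto (fun k => X (k + 1) * (Y k * (Y k)ᵀ + lam • 1)) atTop
        (𝓝 (Xinf * (Yinf * Yinfᵀ + lam • 1))) :=
      tendsto_matMul hX1 ((tendsto_matMul hY0 (tendsto_matTrans hY0)).add tendsto_const_nhds)
    have tR : Tendsto (fun k => Atil * (Y k)ᵀ + lam • (Lᵀ * U k) - Lᵀ * Lam k) atTop
        (𝓝 (Atil * Yinfᵀ + lam • (Lᵀ * Uinf) - Lᵀ * Laminf)) :=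
      ((tendsto_matMul tendsto_const_nhds (tendsto_matTrans hY0)).add
        ((tendsto_matMul tendsto_const_nhds hU0).const_smul lam)).sub
        (tendsto_matMul tendsto_const_nhds hLam0)
    exact tendsto_nhds_unique (Tendsto.congr (fun k => hXk k) tL) tR
  have g1 : (Xinf * Yinf - Atil) * Yinfᵀ + Lᵀ * Laminf = 0 := by
    rw [Matrix.mul_add, Matrix.mul_smul, Matrix.mul_one, ← hLXU, ← Matrix.mul_assoc Lᵀ L Xinf, hL, Matrix.one_mul] at keyX
    have h2 : Xinf * (Yinf * Yinfᵀ) =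
        Atil * Yinfᵀ + lam • Xinf - Lᵀ * Laminf - lam • Xinf := eq_sub_of_add_eq keyX
    rw [Matrix.sub_mul, Matrix.mul_assoc, h2]; abel
  -- stationarity in Y
  have hNdet : ∀ k, IsUnit ((X (k + 1))ᵀ * X (k + 1) + phi • (1 : Matrix (Fin r) (Fin r) ℝ)).det := by
    intro k
    have hps : Matrix.PosSemidef ((X (k + 1))ᵀ * X (k + 1)) := by
      have := Matrix.posSemidef_conjTranspose_mul_self (X (k + 1))
      rwa [Matrix.conjTranspose_eq_transpose_of_trivial] at this
    have hpd : Matrix.PosDef (phi • (1 : Matrix (Fin r) (Fin r) ℝ)) := by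
      rw [smul_one_eq_diagonal]
      exact Matrix.PosDef.diagonal fun _ => hphi
    exact (Matrix.PosDef.posSemidef_add hps hpd).det_pos.ne'.isUnit
  have hYk : ∀ k, ((X (k + 1))ᵀ * X (k + 1) + phi • 1) * Y (k + 1) =
      (X (k + 1))ᵀ * Atil + phi • (V k * Rᵀ) - Phi k * Rᵀ := by
    intro k
    rw [hY k, ← Matrix.mul_assoc, Matrix.mul_nonsing_inv _ (hNdet k), Matrix.one_mul]
  have keyY : (Xinfᵀ * Xinf + phi • 1) * Yinf =
      Xinfᵀ * Atil + phi • (Vinf * Rᵀ) - Phiinf * Rᵀ := by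
    have tL : Tendsto (fun k => ((X (k + 1))ᵀ * X (k + 1) + phi • 1) * Y (k + 1)) atTop
        (𝓝 ((Xinfᵀ * Xinf + phi • 1) * Yinf)) :=
      tendsto_matMul (((tendsto_matMul (tendsto_matTrans hX1) hX1)).add
        tendsto_const_nhds) hY1
    have tR : Tendsto (fun k => (X (k + 1))ᵀ * Atil + phi • (V k * Rᵀ) - Phi k * Rᵀ) atTop
        (𝓝 (Xinfᵀ * Atil + phi • (Vinf * Rᵀ) - Phiinf * Rᵀ)) :=
      ((tendsto_matMul (tendsto_matTrans hX1) tendsto_const_nhds).add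
        ((tendsto_matMul hV0 tendsto_const_nhds).const_smul phi)).sub
        (tendsto_matMul hPhi0 tendsto_const_nhds)
    exact tendsto_nhds_unique (Tendsto.congr (fun k => hYk k) tL) tR
  have g2 : Xinfᵀ * (Xinf * Yinf - Atil) + Phiinf * Rᵀ = 0 := by
    rw [← hYRV, Matrix.mul_assoc, hR, Matrix.mul_one, Matrix.add_mul, Matrix.smul_mul, Matrix.one_mul] at keyY
    have h2 : Xinfᵀ * Xinf * Yinf =
        Xinfᵀ * Atil + phi • Yinf - Phiinf * Rᵀ - phi • Yinf := eq_sub_of_add_eq keyY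
    rw [Matrix.mul_sub, ← Matrix.mul_assoc, h2]; abel
  exact ⟨g1, g2, hfeasU, hfeasV,
    fun i j => (hsignU i j).1, fun i j => (hsignU i j).2.1, fun i j => (hsignU i j).2.2,
    fun i j => (hsignV i j).1, fun i j => (hsignV i j).2.1, fun i j => (hsignV i j).2.2⟩
end

section
/- Let A be a real m×n matrix partitioned by rows into b blocks A_1, …, A_b (with the i-th block having m_i rows, Σ m_i = m and each m_i ≥ n). Suppose each block admits a factorization A_i = Q_i^{(1)} R_i where Q_i^{(1)} is m_i×n with orthonormal columns and R_i is n×n upper triangular, and suppose the stacked bn×n matrix [R_1; …; R_b] admits a factorization [R_1; …; R_b] = [Q_1^{(2)}; …; Q_b^{(2)}] R where each Q_i^{(2)} is n×n, the stacked bn×n matrix [Q_1^{(2)}; …; Q_b^{(2)}] has orthonormal columns (i.e. Σ_i (Q_i^{(2)})ᵀ Q_i^{(2)} = I), and R is n×n upper triangular. Define Q as the m×n matrix whose i-th row block is Q_i^{(1)} Q_i^{(2)}. Then Q has orthonormal columns (QᵀQ = I) and A = Q R; that is, (Q, R) is a QR decomposition of A. -/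
open Matrix

/-- **Correctness of the direct TSQR algorithm.** Partition `A` by rows into `b` blocks
(row index type `(i : Fin b) × Fin (msz i)`, with `msz i ≥ n`). If each block factors as
`A_i = Q_i^{(1)} R_i` with `Q_i^{(1)}` having orthonormal columns and `R_i` upper
triangular, and the stacked matrix `[R_1; …; R_b]` factors as `[Q_1^{(2)}; …; Q_b^{(2)}] R`
with the stack `[Q_1^{(2)}; …; Q_b^{(2)}]` having orthonormal columns
(`∑ i, (Q_i^{(2)})ᵀ Q_i^{(2)} = I`) and `R` upper triangular, then the matrix `Q` whose
`i`-th row block is `Q_i^{(1)} Q_i^{(2)}` has orthonormal columns and `A = Q R`. -/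
theorem tsqr_is_qr_decomposition
    {b n : ℕ} (msz : Fin b → ℕ) (hm : ∀ i, n ≤ msz i)
    (A : Matrix ((i : Fin b) × Fin (msz i)) (Fin n) ℝ)
    (Q1 : (i : Fin b) → Matrix (Fin (msz i)) (Fin n) ℝ)
    (R1 : Fin b → Matrix (Fin n) (Fin n) ℝ)
    (hQ1 : ∀ i, (Q1 i)ᵀ * Q1 i = 1)
    (hR1 : ∀ i, ∀ s t : Fin n, (t : ℕ) < (s : ℕ) → R1 i s t = 0)
    (hA : ∀ (i : Fin b) (a : Fin (msz i)) (j : Fin n), A ⟨i, a⟩ j = (Q1 i * R1 i) a j)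
    (Q2 : Fin b → Matrix (Fin n) (Fin n) ℝ)
    (R : Matrix (Fin n) (Fin n) ℝ)
    (hQ2 : ∑ i, (Q2 i)ᵀ * Q2 i = 1)
    (hR : ∀ s t : Fin n, (t : ℕ) < (s : ℕ) → R s t = 0)
    (hfact : ∀ i, R1 i = Q2 i * R)
    (Q : Matrix ((i : Fin b) × Fin (msz i)) (Fin n) ℝ)
    (hQdef : ∀ (i : Fin b) (a : Fin (msz i)) (j : Fin n), Q ⟨i, a⟩ j = (Q1 i * Q2 i) a j) :
    Qᵀ * Q = 1 ∧ A = Q * R := by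

  constructor
  · ext s t
    have h1 : (Qᵀ * Q) s t = ∑ x : (i : Fin b) × Fin (msz i), Q x s * Q x t := by
      simp [mul_apply]
    rw [h1, ← Finset.univ_sigma_univ, Finset.sum_sigma]
    have h3 : ∀ i : Fin b, (∑ a : Fin (msz i), Q ⟨i, a⟩ s * Q ⟨i, a⟩ t)
        = ((Q2 i)ᵀ * Q2 i) s t := by
      intro i
      have h4 : ∑ a : Fin (msz i), Q ⟨i, a⟩ s * Q ⟨i, a⟩ t
          = ((Q1 i * Q2 i)ᵀ * (Q1 i * Q2 i)) s t := by
        simp only [mul_apply, transpose_apply]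
        exact Finset.sum_congr rfl fun a _ => by rw [hQdef, hQdef]; simp [mul_apply]
      rw [h4, transpose_mul, Matrix.mul_assoc, ← Matrix.mul_assoc (Q1 i)ᵀ, hQ1,
        Matrix.one_mul]
    simp only [h3]
    rw [← Matrix.sum_apply s t _ _, hQ2]
  · ext ⟨i, a⟩ j
    rw [hA, hfact, ← Matrix.mul_assoc, mul_apply, mul_apply]
    exact Finset.sum_congr rfl fun k _ => by rw [hQdef]
end
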